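/- arXiv:1508.03613 — 3 statements merged into one kernel-verified Lean document; each statement's English description precedes it below -/
import Mathlib

section
/- Let (M,·) be a countable semigroup and suppose that for every semigroup structure 𝓜 based on (M,·) in a countable language and every 𝓜-definable IP set X ⊆ M there is an idempotent complete 1-type over 𝓜 containing the formula defining X. Then for every IP set X ⊆ M and every Y ⊆ X, either Y or X∖Y is an IP set. -/
open Filter FirstOrder FirstOrder.Language

attribute [local instance] Ultrafilter.mul

/-! ## Combinatorial notions in a semigroup -/

/-- `X` is an IP set: it contains `FP u` (all finite products, in increasing order of indices,
of distinct terms) of some sequence `u`. -/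
def IsIP {M : Type*} [Semigroup M] (X : Set M) : Prop :=
  ∃ u : Stream' M, Hindman.FP u ⊆ X

/-- `X` is IIP (infinitely IP): it contains an infinite set of the form `FP u`. -/
def IsIIP {M : Type*} [Semigroup M] (X : Set M) : Prop :=
  ∃ u : Stream' M, Hindman.FP u ⊆ X ∧ (Hindman.FP u).Infinite

/-- `X` is DIP (distinctly IP): it contains `FP u` for an injective sequence `u`. -/
def IsDIP {M : Type*} [Semigroup M] (X : Set M) : Prop :=
  ∃ u : Stream' M, Function.Injective u ∧ Hindman.FP u ⊆ X

/-- An ultrafilter is nonprincipal if it is not of the form `{A | a ∈ A}` for any `a`. -/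
def Ultrafilter.Nonprincipal {M : Type*} (U : Ultrafilter M) : Prop :=
  ∀ a : M, U ≠ pure a

/-- A semigroup is moving if the product of two nonprincipal ultrafilters
(for the ultrafilter product `A ∈ U * V ↔ {m | {n | m * n ∈ A} ∈ V} ∈ U`) is nonprincipal. -/
def IsMoving (M : Type*) [Semigroup M] : Prop :=
  ∀ U V : Ultrafilter M, U.Nonprincipal → V.Nonprincipal → (U * V).Nonprincipal

/-! ## Types over a semigroup structure -/

/-- Formulas in one free variable, with parameters from `M`. -/
abbrev Form1 (L : Language) (M : Type*) := L.Formula (M ⊕ Fin 1)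

/-- Formulas in two free variables (`x` and `y`), with parameters from `M`. -/
abbrev Form2 (L : Language) (M : Type*) := L.Formula (M ⊕ Fin 2)

/-- Realization of a 1-variable formula with parameters at the point `a`. -/
def Realize1 {L : Language} {M : Type*} (S : L.Structure M) (φ : Form1 L M) (a : M) : Prop :=
  @Formula.Realize L M S _ φ (Sum.elim id fun _ => a)

/-- Realization of a 2-variable formula with parameters at the pair `(a, b)`. -/
def Realize2 {L : Language} {M : Type*} (S : L.Structure M) (φ : Form2 L M) (a b : M) : Prop :=
  @Formula.Realize L M S _ φ (Sum.elim id ![a, b])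

/-- A complete 1-type over the structure `S` (with parameters for all elements of `M`):
a complete, finitely satisfiable (in `S`) set of formulas in one free variable. -/
def IsCompleteType1 {L : Language} {M : Type*} (S : L.Structure M)
    (p : Set (Form1 L M)) : Prop :=
  (∀ φ : Form1 L M, φ ∈ p ↔ φ.not ∉ p) ∧
    ∀ s : Finset (Form1 L M), ↑s ⊆ p → ∃ a : M, ∀ φ ∈ s, Realize1 S φ a

/-- A complete 2-type over the structure `S` (with parameters for all elements of `M`). -/
def IsCompleteType2 {L : Language} {M : Type*} (S : L.Structure M)
    (q : Set (Form2 L M)) : Prop :=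
  (∀ φ : Form2 L M, φ ∈ q ↔ φ.not ∉ q) ∧
    ∀ s : Finset (Form2 L M), ↑s ⊆ q → ∃ a b : M, ∀ φ ∈ s, Realize2 S φ a b

/-- `substX u φ` is `φ(u, y)`: the element `u` is substituted for the variable `x`. -/
def substX {L : Language} {M : Type*} (u : M) (φ : Form2 L M) : Form2 L M :=
  φ.subst (Sum.elim (fun m => Term.var (Sum.inl m))
    ![Term.var (Sum.inl u), Term.var (Sum.inr 1)])

/-- A 2-type `q(x, y)` is independent if for every `φ(x, y) ∈ q` there is `u ∈ M` with
`φ(u, y) ∈ q`. -/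
def IsIndependent {L : Language} {M : Type*} (q : Set (Form2 L M)) : Prop :=
  ∀ φ ∈ q, ∃ u : M, substX u φ ∈ q

/-- `toX φ` views the 1-variable formula `φ` as a 2-variable formula `φ(x)`. -/
def toX {L : Language} {M : Type*} (φ : Form1 L M) : Form2 L M :=
  φ.subst (Sum.elim (fun m => Term.var (Sum.inl m)) fun _ => Term.var (Sum.inr 0))

/-- `toY φ` views the 1-variable formula `φ` as a 2-variable formula `φ(y)`. -/
def toY {L : Language} {M : Type*} (φ : Form1 L M) : Form2 L M :=
  φ.subst (Sum.elim (fun m => Term.var (Sum.inl m)) fun _ => Term.var (Sum.inr 1))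

/-- `toXY f φ` is `φ(x · y)`, where `f` is the distinguished binary function symbol. -/
def toXY {L : Language} {M : Type*} (f : L.Functions 2) (φ : Form1 L M) : Form2 L M :=
  φ.subst (Sum.elim (fun m => Term.var (Sum.inl m))
    fun _ => Term.func f ![Term.var (Sum.inr 0), Term.var (Sum.inr 1)])

/-- A complete 1-type `p` over `S` is idempotent (with respect to the binary function symbol `f`
interpreted as the semigroup operation) if there is an independent complete 2-type `q(x, y)` with
`p(x) ⊆ q`, `p(y) ⊆ q` and `p(x · y) ⊆ q`. -/
def IsIdempotentType {L : Language} {M : Type*} (S : L.Structure M) (f : L.Functions 2)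
    (p : Set (Form1 L M)) : Prop :=
  IsCompleteType1 S p ∧
    ∃ q : Set (Form2 L M), IsCompleteType2 S q ∧ IsIndependent q ∧
      (∀ φ ∈ p, toX φ ∈ q) ∧ (∀ φ ∈ p, toY φ ∈ q) ∧ (∀ φ ∈ p, toXY f φ ∈ q)

/-- A 1-type over `S` is principal if it is realized by an element of `M`. -/
def IsPrincipalType {L : Language} {M : Type*} (S : L.Structure M)
    (p : Set (Form1 L M)) : Prop :=
  ∃ a : M, ∀ φ ∈ p, Realize1 S φ a


/-! Add to `(M, ·)` predicates for `X` and `Y`. The hypothesis yields an idempotent type `p`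
containing `X(x)`; being complete, `p` contains `Y(x)` or `X(x) ∧ ¬Y(x)`. Every formula `φ` of an
idempotent type defines an IP set: applying the independence of the witnessing 2-type `q` to
`φ(x) ∧ φ(x·y)` gives `u ⊨ φ` with `φ ∧ φ(u·x) ∈ p`, and iterating this step is the
Galvin–Glazer construction of a sequence all of whose finite products satisfy `φ`. -/

namespace Hindman

/-- The Galvin–Glazer construction; `exists_FP_of_large` is the case `P = (· ∈ U)` for an
idempotent ultrafilter `U`. -/
theorem exists_FP_subset_of_forall_exists_mem_inter_preimage {M : Type*} [Semigroup M]
    {P : Set M → Prop} (hP : ∀ s, P s → ∃ u ∈ s, P (s ∩ (u * ·) ⁻¹' s)) {s₀ : Set M}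
    (h₀ : P s₀) : ∃ a : Stream' M, FP a ⊆ s₀ := by
  choose elem elem_mem hnext using hP
  let next (s : {s // P s}) : {s // P s} := ⟨_, hnext s.1 s.2⟩
  let seq : {s // P s} → Stream' M := Stream'.corec (fun s => elem s.1 s.2) next
  have seq_tail (s) : (seq s).tail = seq (next s) := by
    dsimp only [seq]
    rw [Stream'.corec_eq, Stream'.tail_cons]
  suffices ∀ a : Stream' M, ∀ m ∈ FP a, ∀ s, a = seq s → m ∈ s.1 from
    ⟨seq ⟨s₀, h₀⟩, fun m hm => this _ m hm _ rfl⟩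
  intro a m hm
  induction hm with
  | head' a =>
    rintro s rfl
    exact elem_mem s.1 s.2
  | tail' a m _ ih =>
    rintro s rfl
    exact (ih (next s) (seq_tail s)).1
  | cons' a m _ ih =>
    rintro s rfl
    exact (ih (next s) (seq_tail s)).2

end Hindman

section Types

variable {L : Language} {M : Type*}

/-- `φ(u · x)`. -/
def substMulLeft (f : L.Functions 2) (u : M) (φ : Form1 L M) : Form1 L M :=
  φ.subst (Sum.elim (fun m => Term.var (Sum.inl m))
    fun _ => Term.func f ![Term.var (Sum.inl u), Term.var (Sum.inr 0)])

def IsCompleteType (S : L.Structure M) {α : Type*} (p : Set (L.Formula (M ⊕ α))) : Prop :=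
  (∀ φ, φ ∈ p ↔ φ.not ∉ p) ∧
    ∀ s : Finset (L.Formula (M ⊕ α)), ↑s ⊆ p → ∃ v : α → M, ∀ φ ∈ s, φ.Realize (Sum.elim id v)

variable {S : L.Structure M}

theorem realize_subst_sumElim {α β : Type*} (φ : L.Formula (M ⊕ α)) (g : α → L.Term (M ⊕ β))
    (v : β → M) :
    Formula.Realize (φ.subst (Sum.elim (fun m => Term.var (Sum.inl m)) g)) (Sum.elim id v) ↔
      φ.Realize (Sum.elim id fun i => (g i).realize (Sum.elim id v)) := by
  rw [Formula.Realize, BoundedFormula.realize_subst]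
  refine iff_of_eq (congrArg (BoundedFormula.Realize φ · default) (funext fun x => ?_))
  cases x <;> rfl

theorem realize1_not {φ : Form1 L M} {a : M} : Realize1 S φ.not a ↔ ¬Realize1 S φ a :=
  Iff.rfl

theorem realize1_inf {φ ψ : Form1 L M} {a : M} :
    Realize1 S (φ ⊓ ψ) a ↔ Realize1 S φ a ∧ Realize1 S ψ a :=
  Formula.realize_inf

theorem realize_toX {φ : Form1 L M} {v : Fin 2 → M} :
    (toX φ).Realize (Sum.elim id v) ↔ Realize1 S φ (v 0) :=
  realize_subst_sumElim ..

theorem realize_toY {φ : Form1 L M} {v : Fin 2 → M} :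
    (toY φ).Realize (Sum.elim id v) ↔ Realize1 S φ (v 1) :=
  realize_subst_sumElim ..

theorem realize_substX {φ : Form2 L M} {u : M} {v : Fin 2 → M} :
    (substX u φ).Realize (Sum.elim id v) ↔ φ.Realize (Sum.elim id ![u, v 1]) := by
  rw [substX, realize_subst_sumElim]
  congr! 2
  funext i
  fin_cases i <;> rfl

namespace IsCompleteType

variable {α : Type*} {p : Set (L.Formula (M ⊕ α))} {φ ψ : L.Formula (M ⊕ α)}

theorem exists_realize (hp : IsCompleteType S p) (hφ : φ ∈ p) :
    ∃ v : α → M, φ.Realize (Sum.elim id v) :=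
  let ⟨v, hv⟩ := hp.2 {φ} (by simpa using hφ)
  ⟨v, hv φ (Finset.mem_singleton_self φ)⟩

theorem not_mem_of_notMem (hp : IsCompleteType S p) (hφ : φ ∉ p) : φ.not ∈ p :=
  by_contra fun h => hφ ((hp.1 φ).2 h)

theorem inf_mem (hp : IsCompleteType S p) (hφ : φ ∈ p) (hψ : ψ ∈ p) : φ ⊓ ψ ∈ p := by
  classical
  by_contra h
  obtain ⟨v, hv⟩ := hp.2 {φ, ψ, (φ ⊓ ψ).not} <| by
    simp [Set.insert_subset_iff, hφ, hψ, hp.not_mem_of_notMem h]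
  exact hv (φ ⊓ ψ).not (by simp) (Formula.realize_inf.2 ⟨hv φ (by simp), hv ψ (by simp)⟩)

theorem mem_of_forall_realize_imp (hp : IsCompleteType S p) (hφ : φ ∈ p)
    (h : ∀ v : α → M, φ.Realize (Sum.elim id v) → ψ.Realize (Sum.elim id v)) : ψ ∈ p := by
  by_contra hψ
  obtain ⟨v, hv⟩ := hp.exists_realize (hp.inf_mem hφ (hp.not_mem_of_notMem hψ))
  rw [Formula.realize_inf, Formula.realize_not] at hv
  exact hv.2 (h v hv.1)

end IsCompleteType

theorem IsCompleteType1.isCompleteType {p : Set (Form1 L M)} (hp : IsCompleteType1 S p) :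
    IsCompleteType S p :=
  ⟨hp.1, fun s hs => let ⟨a, ha⟩ := hp.2 s hs; ⟨fun _ => a, ha⟩⟩

theorem IsCompleteType2.isCompleteType {q : Set (Form2 L M)} (hq : IsCompleteType2 S q) :
    IsCompleteType S q :=
  ⟨hq.1, fun s hs => let ⟨a, b, hab⟩ := hq.2 s hs; ⟨![a, b], hab⟩⟩

theorem mem_of_toY_mem {p : Set (Form1 L M)} {q : Set (Form2 L M)} (hp : IsCompleteType S p)
    (hq : IsCompleteType S q) (hpq : ∀ φ ∈ p, toY φ ∈ q) {θ : Form1 L M} (hθ : toY θ ∈ q) :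
    θ ∈ p := by
  by_contra h
  obtain ⟨v, hv⟩ := hq.exists_realize (hq.inf_mem hθ (hpq _ (hp.not_mem_of_notMem h)))
  rw [Formula.realize_inf, realize_toY, realize_toY] at hv
  exact hv.2 hv.1

variable [Semigroup M] {f : L.Functions 2}

theorem realize_toXY (hf : ∀ x y : M, S.funMap f ![x, y] = x * y) {φ : Form1 L M}
    {v : Fin 2 → M} : (toXY f φ).Realize (Sum.elim id v) ↔ Realize1 S φ (v 0 * v 1) := by
  rw [toXY, realize_subst_sumElim, ← hf, Realize1]
  congr!
  exact Term.realize_functions_apply₂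

theorem realize1_substMulLeft (hf : ∀ x y : M, S.funMap f ![x, y] = x * y) {φ : Form1 L M}
    {u a : M} : Realize1 S (substMulLeft f u φ) a ↔ Realize1 S φ (u * a) := by
  rw [Realize1, substMulLeft, realize_subst_sumElim, ← hf, Realize1]
  congr!
  exact Term.realize_functions_apply₂

namespace IsIdempotentType

variable {p : Set (Form1 L M)} {φ : Form1 L M}

theorem exists_realize_inf_substMulLeft_mem (hf : ∀ x y : M, S.funMap f ![x, y] = x * y)
    (hp : IsIdempotentType S f p) (hφ : φ ∈ p) :
    ∃ u, Realize1 S φ u ∧ φ ⊓ substMulLeft f u φ ∈ p := by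
  obtain ⟨hp, q, hq, hind, hpX, hpY, hpXY⟩ := hp
  replace hp := hp.isCompleteType
  replace hq := hq.isCompleteType
  -- independence turns `φ(x) ∧ φ(x·y) ∈ q` into `φ(u) ∧ φ(u·y) ∈ q`, and `φ(u·y) ∈ q` pulls
  -- back to `φ(u·x) ∈ p` along `p(y) ⊆ q`
  obtain ⟨u, hu⟩ := hind _ (hq.inf_mem (hpX φ hφ) (hpXY φ hφ))
  have realize_hu (v : Fin 2 → M) : (substX u (toX φ ⊓ toXY f φ)).Realize (Sum.elim id v) ↔
      Realize1 S φ u ∧ Realize1 S φ (u * v 1) := by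
    rw [realize_substX, Formula.realize_inf, realize_toX, realize_toXY hf]
    rfl
  obtain ⟨v, hv⟩ := hq.exists_realize hu
  refine ⟨u, ((realize_hu v).1 hv).1, hp.inf_mem hφ (mem_of_toY_mem hp hq hpY ?_)⟩
  exact hq.mem_of_forall_realize_imp hu fun v hv =>
    realize_toY.2 ((realize1_substMulLeft hf).2 ((realize_hu v).1 hv).2)

theorem isIP_of_mem (hf : ∀ x y : M, S.funMap f ![x, y] = x * y) (hp : IsIdempotentType S f p)
    (hφ : φ ∈ p) : IsIP {a | Realize1 S φ a} := by
  refine Hindman.exists_FP_subset_of_forall_exists_mem_inter_preimage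
    (P := fun s => ∃ ψ ∈ p, {a | Realize1 S ψ a} = s) ?_ ⟨φ, hφ, rfl⟩
  rintro _ ⟨ψ, hψ, rfl⟩
  obtain ⟨u, hu, hmem⟩ := hp.exists_realize_inf_substMulLeft_mem hf hψ
  exact ⟨u, hu, _, hmem, by ext; simp [realize1_inf, realize1_substMulLeft hf]⟩

end IsIdempotentType

end Types

inductive MulPredFunc : ℕ → Type
  | mul : MulPredFunc 2

inductive MulPredRel (ι : Type) : ℕ → Type
  | pred : ι → MulPredRel ι 1

section MulPredLanguage

variable {ι : Type}

def mulPredLanguage (ι : Type) : FirstOrder.Language.{0, 0} := ⟨MulPredFunc, MulPredRel ι⟩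

instance (n : ℕ) : Subsingleton (MulPredFunc n) := ⟨by rintro ⟨⟩ ⟨⟩; rfl⟩

def MulPredRel.index {n : ℕ} : MulPredRel ι n → ι
  | .pred i => i

instance [Countable ι] (n : ℕ) : Countable (MulPredRel ι n) :=
  Function.Injective.countable (f := MulPredRel.index) (by rintro ⟨i⟩ ⟨j⟩ rfl; rfl)

instance [Countable ι] : Countable (mulPredLanguage ι).Symbols :=
  inferInstanceAs (Countable ((Σ n, MulPredFunc n) ⊕ Σ n, MulPredRel ι n))

variable {M : Type*} [Mul M]

@[reducible] def mulPredStructure (A : ι → Set M) : (mulPredLanguage ι).Structure M where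
  funMap | .mul, v => v 0 * v 1
  RelMap | .pred i, v => v 0 ∈ A i

def predFormula (i : ι) : Form1 (mulPredLanguage ι) M :=
  Relations.formula₁ (MulPredRel.pred i) (Term.var (Sum.inr 0))

theorem realize1_predFormula (A : ι → Set M) (i : ι) (a : M) :
    Realize1 (mulPredStructure A) (predFormula i) a ↔ a ∈ A i :=
  letI := mulPredStructure A
  Formula.realize_rel₁

theorem mulPredStructure_funMap_mul (A : ι → Set M) (x y : M) :
    (mulPredStructure A).funMap (L := mulPredLanguage ι) MulPredFunc.mul ![x, y] = x * y :=
  rfl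

end MulPredLanguage

theorem hindman_of_exists_idempotent_type_general {M : Type*} [Semigroup M]
    (h : ∀ (L : FirstOrder.Language.{0, 0}), Countable L.Symbols →
      ∀ (f : L.Functions 2) (S : L.Structure M),
        (∀ x y : M, S.funMap f ![x, y] = x * y) →
        ∀ φ : Form1 L M, IsIP {a : M | Realize1 S φ a} →
          ∃ p : Set (Form1 L M), φ ∈ p ∧ IsIdempotentType S f p)
    (X : Set M) (hX : IsIP X) (Y : Set M) : IsIP Y ∨ IsIP (X \ Y) := by
  have hf := mulPredStructure_funMap_mul ![X, Y]
  obtain ⟨p, hXp, hp⟩ := h _ inferInstance _ _ hf (predFormula 0)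
    (by simpa [realize1_predFormula] using hX)
  have hpc := hp.1.isCompleteType
  by_cases hY : predFormula 1 ∈ p
  · left
    simpa [realize1_predFormula] using hp.isIP_of_mem hf hY
  · right
    simpa [realize1_inf, realize1_not, realize1_predFormula, ← Set.mem_sdiff] using
      hp.isIP_of_mem hf (hpc.inf_mem hXp (hpc.not_mem_of_notMem hY))

/-- if for every semigroup structure based on the countable semigroup `(M, ·)`
in a countable language every definable IP set is contained in some idempotent complete 1-type,
then IP sets in `M` are partition regular. -/
theorem hindman_of_exists_idempotent_type {M : Type*} [Semigroup M] [Countable M]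
    (h : ∀ (L : FirstOrder.Language.{0, 0}), Countable L.Symbols →
      ∀ (f : L.Functions 2) (S : L.Structure M),
        (∀ x y : M, S.funMap f ![x, y] = x * y) →
        ∀ φ : Form1 L M, IsIP {a : M | Realize1 S φ a} →
          ∃ p : Set (Form1 L M), φ ∈ p ∧ IsIdempotentType S f p)
    (X : Set M) (hX : IsIP X) (Y : Set M) (hYX : Y ⊆ X) : IsIP Y ∨ IsIP (X \ Y) :=
  hindman_of_exists_idempotent_type_general h X hX Y
end

section
/- Let (M,·) be a moving semigroup and let x : ℕ → M be an injective sequence. Then there exists a nonprincipal idempotent ultrafilter 𝓤 on M such that for every m ∈ ℕ, the set FP((x_n)_{n≥m}) of finite products of terms of the tail sequence belongs to 𝓤. -/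
open Filter FirstOrder FirstOrder.Language

attribute [local instance] Ultrafilter.mul

/-!
The ultrafilters that are nonprincipal and contain `FP` of every tail of `x` form a closed
subsemigroup of the compact right topological semigroup `βM`: it is closed under products because
a finite product times a finite product from a late enough tail is again a finite product, and
the moving hypothesis keeps products nonprincipal. It is nonempty because the tails
`FP (x.drop n)` form a decreasing sequence of infinite sets. Ellis' lemma then provides an idempotent in it.
-/

namespace Ultrafilter

variable {α : Type*}

theorem nonprincipal_iff_le_cofinite (U : Ultrafilter α) :
    U.Nonprincipal ↔ (U : Filter α) ≤ cofinite := by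
  refine ⟨fun h => ?_, fun h a hU => ?_⟩
  · rcases U.le_cofinite_or_eq_pure with hle | ⟨a, rfl⟩
    · exact hle
    · exact absurd rfl (h a)
  · subst hU
    exact h (Set.finite_singleton a).compl_mem_cofinite rfl

theorem isClosed_setOf_nonprincipal : IsClosed {U : Ultrafilter α | U.Nonprincipal} := by
  have h : {U : Ultrafilter α | U.Nonprincipal} = ⋂ a : α, {U | {a}ᶜ ∈ U} := by
    ext U
    simp only [Set.mem_ofPred_eq, Set.mem_iInter, nonprincipal_iff_le_cofinite,
      le_cofinite_iff_compl_singleton_mem, mem_coe]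
  rw [h]
  exact isClosed_iInter fun a => ultrafilter_isClosed_basic _

theorem exists_nonprincipal_forall_mem_of_antitone {s : ℕ → Set α} (hs : Antitone s)
    (hinf : ∀ n, (s n).Infinite) : ∃ U : Ultrafilter α, U.Nonprincipal ∧ ∀ n, s n ∈ U := by
  let F : ℕ → Filter α := fun n => cofinite ⊓ 𝓟 (s n)
  have hF : Antitone F := fun m n h => inf_le_inf_left _ (principal_mono.mpr (hs h))
  have : (⨅ n, F n).NeBot :=
    iInf_neBot_of_directed' hF.directed_ge fun n => (hinf n).cofinite_inf_principal_neBot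
  obtain ⟨U, hU⟩ := exists_le (⨅ n, F n)
  refine ⟨U, (nonprincipal_iff_le_cofinite U).mpr (hU.trans ((iInf_le F 0).trans inf_le_left)),
    fun n => hU ((iInf_le F n).trans inf_le_right (mem_principal_self _))⟩

end Ultrafilter

namespace Hindman

variable {M : Type*} [Semigroup M]

theorem FP_drop_antitone (a : Stream' M) : Antitone fun n => FP (a.drop n) := by
  intro m n h
  simpa only [Stream'.drop_drop, Nat.add_sub_cancel' h] using FP_drop_subset_FP (a.drop m) (n - m)

theorem FP_infinite_of_injective {a : Stream' M} (ha : Function.Injective a) :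
    (FP a).Infinite :=
  (Set.infinite_range_of_injective ha).mono (Set.range_subset_iff.mpr (FP.singleton a))

theorem forall_FP_drop_mem_mul {a : Stream' M} {U V : Ultrafilter M}
    (hU : ∀ n, FP (a.drop n) ∈ U) (hV : ∀ n, FP (a.drop n) ∈ V) (n : ℕ) :
    FP (a.drop n) ∈ U * V := by
  show ∀ᶠ m in (U * V : Ultrafilter M), m ∈ FP (a.drop n)
  rw [Ultrafilter.eventually_mul]
  filter_upwards [hU n] with m hm
  obtain ⟨k, hk⟩ := FP.mul hm
  filter_upwards [hV (n + k)] with m' hm'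
  exact hk m' (by rwa [Stream'.drop_drop])

end Hindman

/-- in a moving semigroup, for any injective sequence `x` there is a
nonprincipal idempotent ultrafilter containing `FP` of every tail of `x`. -/
theorem exists_nonprincipal_idempotent_mem_FP_drop {M : Type*} [Semigroup M] (hM : IsMoving M)
    (x : Stream' M) (hx : Function.Injective x) :
    ∃ U : Ultrafilter M, U.Nonprincipal ∧ U * U = U ∧
      ∀ m : ℕ, Hindman.FP (x.drop m) ∈ U := by
  let S : Set (Ultrafilter M) := {U | U.Nonprincipal ∧ ∀ n, Hindman.FP (x.drop n) ∈ U}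
  have hS_closed : IsClosed S := by
    simp only [S, Set.ofPred_and, Set.ofPred_forall]
    exact Ultrafilter.isClosed_setOf_nonprincipal.inter
      (isClosed_iInter fun n => ultrafilter_isClosed_basic _)
  have hS_nonempty : S.Nonempty :=
    Ultrafilter.exists_nonprincipal_forall_mem_of_antitone (Hindman.FP_drop_antitone x)
      fun n => Hindman.FP_infinite_of_injective (hx.comp (add_left_injective n))
  have hS_mul : ∀ᵉ (U ∈ S) (V ∈ S), U * V ∈ S := fun U hU V hV =>
    ⟨hM U V hU.1 hV.1, Hindman.forall_FP_drop_mem_mul hU.2 hV.2⟩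
  obtain ⟨U, hU, hUU⟩ := @exists_idempotent_in_compact_subsemigroup _ Ultrafilter.semigroup _ _
    Ultrafilter.continuous_mul_left S hS_nonempty hS_closed.isCompact hS_mul
  exact ⟨U, hU.1, hUU, hU.2⟩
end

section
/- In a countable Hindman semigroup, the notions IIP and DIP coincide: a subset A of a countable semigroup (M,·) in which the IIP sets are partition regular is IIP if and only if it is DIP. -/
open Filter FirstOrder FirstOrder.Language

attribute [local instance] Ultrafilter.mul

/-! In a Hindman semigroup, removing finitely many points from an IIP set leaves it IIP, since
the finite part cannot be IIP. So from `FP u ⊆ B` one can pick `a = u.head` together with the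
IIP set `B' = FP u.tail \ {a}`, which satisfies `B' ⊆ B`, `a • B' ⊆ B` and `a ∉ B'`. Iterating
this step gives a decreasing sequence of IIP sets `B₀ = A ⊇ B₁ ⊇ ⋯` and points `aₙ ∈ Bₙ \ Bₙ₊₁`;
the `aₙ` are then pairwise distinct and `FP a ⊆ A`. -/

namespace Hindman

variable {M : Type*} [Semigroup M]

theorem FP_subset_insert_head (u : Stream' M) :
    FP u ⊆ insert u.head (FP u.tail ∪ (u.head * ·) '' FP u.tail) := by
  intro m hm
  cases hm with
  | head' => exact Set.mem_insert _ _
  | tail' _ _ h => exact Or.inr (Or.inl h)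
  | cons' _ m h => exact Or.inr (Or.inr ⟨m, h, rfl⟩)

theorem FP_tail_infinite {u : Stream' M} (h : (FP u).Infinite) : (FP u.tail).Infinite :=
  fun hfin => h <| ((hfin.union (hfin.image _)).insert _).subset (FP_subset_insert_head u)

end Hindman

open Hindman

section

variable {M : Type*} [Semigroup M]

theorem Set.Finite.not_isIIP {s : Set M} (hs : s.Finite) : ¬IsIIP s :=
  fun ⟨_, hu, hinf⟩ => hinf (hs.subset hu)

theorem IsDIP.isIIP {A : Set M} (h : IsDIP A) : IsIIP A := by
  obtain ⟨u, hinj, hu⟩ := h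
  refine ⟨u, hu, (Set.infinite_range_of_injective hinj).mono ?_⟩
  rintro _ ⟨n, rfl⟩
  exact FP.singleton u n

theorem isDIP_of_forall_exists_mul_mem {P : Set M → Prop}
    (step : ∀ B, P B → ∃ a ∈ B, ∃ B' ⊆ B, P B' ∧ a ∉ B' ∧ ∀ b ∈ B', a * b ∈ B)
    {A : Set M} (hA : P A) : IsDIP A := by
  choose elem elem_mem next next_subset next_P elem_not_mem mul_mem using step
  let succ : {B // P B} → {B // P B} := fun B => ⟨next B.1 B.2, next_P B.1 B.2⟩
  let seq : {B // P B} → Stream' M := fun B n => elem _ (succ^[n] B).2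
  have tail_seq : ∀ B, (seq B).tail = seq (succ B) := fun _ => rfl
  have FP_seq : ∀ B, FP (seq B) ⊆ B.1 := by
    suffices ∀ w, ∀ m ∈ FP w, ∀ B, w = seq B → m ∈ B.1 from fun B m hm => this _ m hm B rfl
    intro w m hm
    induction hm with
    | head' => rintro B rfl; exact elem_mem _ B.2
    | tail' _ _ _ ih => rintro B rfl; exact next_subset _ _ (ih (succ B) (tail_seq B))
    | cons' _ _ _ ih => rintro B rfl; exact mul_mem _ _ _ (ih (succ B) (tail_seq B))
  set B₀ : {B // P B} := ⟨A, hA⟩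
  have antitone : Antitone fun n => (succ^[n] B₀).1 := antitone_nat_of_succ_le fun n => by
    rw [Function.iterate_succ_apply']
    exact next_subset _ _
  have seq_ne : ∀ i j, i < j → seq B₀ i ≠ seq B₀ j := by
    intro i j hij heq
    apply elem_not_mem _ (succ^[i] B₀).2
    have hj : seq B₀ j ∈ (succ^[i + 1] B₀).1 := antitone (Nat.succ_le_of_lt hij) (elem_mem _ _)
    rwa [Function.iterate_succ_apply', ← heq] at hj
  refine ⟨seq B₀, fun i j heq => ?_, FP_seq B₀⟩
  rcases lt_trichotomy i j with hij | hij | hij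
  exacts [absurd heq (seq_ne i j hij), hij, absurd heq.symm (seq_ne j i hij)]

section PartitionRegular

variable (hH : ∀ A : Set M, IsIIP A → ∀ Y Z : Set M, A = Y ∪ Z → IsIIP Y ∨ IsIIP Z)
include hH

theorem IsIIP.diff_finite {A s : Set M} (hA : IsIIP A) (hs : s.Finite) : IsIIP (A \ s) :=
  (hH A hA _ _ (Set.sdiff_union_inter A s).symm).resolve_right
    (hs.subset Set.inter_subset_right).not_isIIP

theorem IsIIP.exists_mul_mem {B : Set M} (hB : IsIIP B) :
    ∃ a ∈ B, ∃ B' ⊆ B, IsIIP B' ∧ a ∉ B' ∧ ∀ b ∈ B', a * b ∈ B := by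
  obtain ⟨u, hu, hinf⟩ := hB
  refine ⟨u.head, hu (FP.head u), FP u.tail \ {u.head}, fun b hb => hu (FP.tail u b hb.1),
    ?_, fun h => h.2 rfl, fun b hb => hu (FP.cons u b hb.1)⟩
  exact IsIIP.diff_finite hH ⟨u.tail, subset_rfl, FP_tail_infinite hinf⟩ (Set.finite_singleton _)

end PartitionRegular

end

theorem isIIP_iff_isDIP_of_hindman_general {M : Type*} [Semigroup M]
    (hH : ∀ A : Set M, IsIIP A → ∀ Y Z : Set M, A = Y ∪ Z → IsIIP Y ∨ IsIIP Z)
    (A : Set M) : IsIIP A ↔ IsDIP A :=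
  ⟨isDIP_of_forall_exists_mul_mem fun _ => IsIIP.exists_mul_mem hH, IsDIP.isIIP⟩

/-- in a countable Hindman semigroup (IIP sets are partition regular), the
notions IIP and DIP coincide. -/
theorem isIIP_iff_isDIP_of_hindman {M : Type*} [Semigroup M] [Countable M]
    (hH : ∀ A : Set M, IsIIP A → ∀ Y Z : Set M, A = Y ∪ Z → IsIIP Y ∨ IsIIP Z)
    (A : Set M) : IsIIP A ↔ IsDIP A :=
  isIIP_iff_isDIP_of_hindman_general hH A
end
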